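/- arXiv:2003.09470 — 2 statements merged into one kernel-verified Lean document; each statement's English description precedes it below -/
import Mathlib

section
/- For any graph G without isolated vertices and any integer k ≥ 1, γ_t(G) ≤ γ_{krt}(G) ≤ k · γ_t(G). -/
open SimpleGraph Finset

/-- `f` is a `k`-rainbow dominating function of `G`: every vertex with empty label
sees all colors of `Fin k` among its neighbors' labels. -/
def IsKRDF {V : Type*} (G : SimpleGraph V) (k : ℕ) (f : V → Finset (Fin k)) : Prop :=
  ∀ v, f v = ∅ → ∀ i : Fin k, ∃ u, G.Adj v u ∧ i ∈ f u

/-- `f` is a `k`-rainbow total dominating function of `G`: a `k`RDF such that every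
vertex labeled by a singleton `{i}` has a neighbor whose label contains `i`. -/
def IsKRTDF {V : Type*} (G : SimpleGraph V) (k : ℕ) (f : V → Finset (Fin k)) : Prop :=
  IsKRDF G k f ∧ ∀ v (i : Fin k), f v = {i} → ∃ u, G.Adj v u ∧ i ∈ f u

/-- The `k`-rainbow domination number of `G`. -/
noncomputable def rdnum {V : Type*} [Fintype V] (G : SimpleGraph V) (k : ℕ) : ℕ :=
  sInf {n | ∃ f : V → Finset (Fin k), IsKRDF G k f ∧ ∑ v, (f v).card = n}

/-- The `k`-rainbow total domination number of `G`. -/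
noncomputable def rtdnum {V : Type*} [Fintype V] (G : SimpleGraph V) (k : ℕ) : ℕ :=
  sInf {n | ∃ f : V → Finset (Fin k), IsKRTDF G k f ∧ ∑ v, (f v).card = n}

/-- The domination number of `G`. -/
noncomputable def domnum {V : Type*} [Fintype V] (G : SimpleGraph V) : ℕ :=
  sInf {n | ∃ D : Finset V, (∀ v ∉ D, ∃ u ∈ D, G.Adj u v) ∧ D.card = n}

/-- The total domination number of `G`. -/
noncomputable def totdomnum {V : Type*} [Fintype V] (G : SimpleGraph V) : ℕ :=
  sInf {n | ∃ D : Finset V, (∀ v, ∃ u ∈ D, G.Adj u v) ∧ D.card = n}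

/-! Upper bound: label every vertex of a minimum total dominating set by all of `Fin k`.
Lower bound: the vertices with nonempty label, together with one neighbor of each vertex
whose label has at least two colors, form a total dominating set, and each vertex `v`
contributes at most `#(f v)` vertices to it. -/

section

variable {V : Type*} {G : SimpleGraph V} {k : ℕ}

def IsTotalDominatingSet (G : SimpleGraph V) (D : Finset V) : Prop :=
  ∀ v, ∃ u ∈ D, G.Adj u v

section Numbers

variable [Fintype V]

theorem totdomnum_le {D : Finset V} (hD : IsTotalDominatingSet G D) : totdomnum G ≤ #D :=
  Nat.sInf_le ⟨D, hD, rfl⟩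

theorem exists_isTotalDominatingSet_card_eq_totdomnum (hiso : ∀ v : V, ∃ u, G.Adj v u) :
    ∃ D, IsTotalDominatingSet G D ∧ #D = totdomnum G :=
  Nat.sInf_mem (s := {n | ∃ D : Finset V, IsTotalDominatingSet G D ∧ #D = n})
    ⟨_, univ, fun v => (hiso v).imp fun u hu => ⟨mem_univ u, hu.symm⟩, rfl⟩

theorem rtdnum_le {f : V → Finset (Fin k)} (hf : IsKRTDF G k f) :
    rtdnum G k ≤ ∑ v, #(f v) :=
  Nat.sInf_le ⟨f, hf, rfl⟩

theorem exists_isKRTDF_sum_card_eq_rtdnum {f : V → Finset (Fin k)} (hf : IsKRTDF G k f) :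
    ∃ f : V → Finset (Fin k), IsKRTDF G k f ∧ ∑ v, #(f v) = rtdnum G k :=
  Nat.sInf_mem (s := {n | ∃ f : V → Finset (Fin k), IsKRTDF G k f ∧ ∑ v, #(f v) = n})
    ⟨_, f, hf, rfl⟩

end Numbers

theorem IsTotalDominatingSet.isKRTDF_ite_univ [DecidableEq V] {D : Finset V}
    (hD : IsTotalDominatingSet G D) (k : ℕ) :
    IsKRTDF G k fun v => if v ∈ D then univ else ∅ := by
  have key (v : V) (i : Fin k) : ∃ u, G.Adj v u ∧ i ∈ if u ∈ D then univ else ∅ := by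
    obtain ⟨u, huD, hadj⟩ := hD v
    exact ⟨u, hadj.symm, by simp [huD]⟩
  exact ⟨fun v _ i => key v i, fun v i _ => key v i⟩

theorem sum_card_ite_univ [Fintype V] [DecidableEq V] (D : Finset V) (k : ℕ) :
    ∑ v, #(if v ∈ D then (univ : Finset (Fin k)) else ∅) = k * #D := by
  simp only [apply_ite Finset.card, card_univ, Fintype.card_fin, card_empty,
    sum_ite_mem, univ_inter, sum_const, smul_eq_mul, Nat.mul_comm]

theorem IsKRTDF.exists_adj_ne_empty {f : V → Finset (Fin k)} (hf : IsKRTDF G k f)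
    (hk : k ≠ 0) {v : V} (hv : #(f v) ≤ 1) : ∃ u, G.Adj v u ∧ f u ≠ ∅ := by
  have to_ne_empty {i : Fin k} : (∃ u, G.Adj v u ∧ i ∈ f u) → ∃ u, G.Adj v u ∧ f u ≠ ∅ :=
    fun ⟨u, hu, hi⟩ => ⟨u, hu, ne_empty_of_mem hi⟩
  rcases Nat.le_one_iff_eq_zero_or_eq_one.mp hv with h0 | h1
  · exact to_ne_empty (hf.1 v (card_eq_zero.mp h0) ⟨0, Nat.pos_of_ne_zero hk⟩)
  · obtain ⟨i, hi⟩ := card_eq_one.mp h1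
    exact to_ne_empty (hf.2 v i hi)

theorem card_filter_ne_empty_add_card_filter_two_le_sum {α ι : Type*} [DecidableEq α]
    (s : Finset ι) (f : ι → Finset α) :
    #{v ∈ s | f v ≠ ∅} + #{v ∈ s | 2 ≤ #(f v)} ≤ ∑ v ∈ s, #(f v) := by
  rw [card_filter, card_filter, ← sum_add_distrib]
  refine sum_le_sum fun v _ => ?_
  simp only [ne_eq, ← card_eq_zero]
  split_ifs <;> omega

theorem IsKRTDF.exists_isTotalDominatingSet_card_le [Fintype V] {f : V → Finset (Fin k)}
    (hf : IsKRTDF G k f) (hk : k ≠ 0) (hiso : ∀ v : V, ∃ u, G.Adj v u) :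
    ∃ D, IsTotalDominatingSet G D ∧ #D ≤ ∑ v, #(f v) := by
  classical
  choose g hg using hiso
  set S : Finset V := {v | f v ≠ ∅}
  set T : Finset V := {v | 2 ≤ #(f v)}
  refine ⟨S ∪ T.image g, fun v => ?_, ?_⟩
  · by_cases hv : #(f v) ≤ 1
    · obtain ⟨u, hu, hfu⟩ := hf.exists_adj_ne_empty hk hv
      exact ⟨u, mem_union_left _ (by simpa [S] using hfu), hu.symm⟩
    · exact ⟨g v, mem_union_right _ (mem_image_of_mem g (mem_filter.mpr ⟨mem_univ v, by omega⟩)), (hg v).symm⟩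
  · calc #(S ∪ T.image g) ≤ #S + #T :=
          (card_union_le _ _).trans (Nat.add_le_add_left card_image_le _)
      _ ≤ ∑ v, #(f v) := card_filter_ne_empty_add_card_filter_two_le_sum _ f

end

theorem totdomnum_le_rtdnum_le {V : Type*} [Fintype V] (G : SimpleGraph V) (k : ℕ)
    (hk : 1 ≤ k) (hiso : ∀ v : V, ∃ u, G.Adj v u) :
    totdomnum G ≤ rtdnum G k ∧ rtdnum G k ≤ k * totdomnum G := by
  classical
  obtain ⟨D, hD, hD_card⟩ := exists_isTotalDominatingSet_card_eq_totdomnum hiso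
  obtain ⟨f, hf, hf_sum⟩ := exists_isKRTDF_sum_card_eq_rtdnum (hD.isKRTDF_ite_univ k)
  obtain ⟨D', hD', hD'_card⟩ := hf.exists_isTotalDominatingSet_card_le (by omega) hiso
  refine ⟨(totdomnum_le hD').trans (hf_sum ▸ hD'_card), ?_⟩
  calc rtdnum G k ≤ ∑ v, #(if v ∈ D then (univ : Finset (Fin k)) else ∅) :=
        rtdnum_le (hD.isKRTDF_ite_univ k)
    _ = k * totdomnum G := by rw [sum_card_ite_univ, hD_card]
end

section
/- The 4-rainbow domination number of the Cartesian product C_4 □ C_4 equals 8. -/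
open SimpleGraph Finset

/-!
A vertex with an empty label needs total weight at least `k` on its neighbourhood, and each unit of
weight is counted by at most `Δ(G)` such vertices, while every other vertex carries weight at least
one; hence `|V| k ≤ (Δ(G) + k) · w(f)` for every `k`RDF `f`. For `C₄ □ C₄` this reads
`64 ≤ 8 · w(f)`, and an explicit function of weight `8` attains the bound.
-/

namespace SimpleGraph

variable {α β V : Type*}

instance boxProdDecidableRelAdj [DecidableEq α] [DecidableEq β] (G : SimpleGraph α)
    (H : SimpleGraph β) [DecidableRel G.Adj] [DecidableRel H.Adj] : DecidableRel (G □ H).Adj :=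
  fun _ _ => decidable_of_iff' _ boxProd_adj

variable [Fintype V] (G : SimpleGraph V) [DecidableRel G.Adj]

theorem sum_sum_neighborFinset {M : Type*} [AddCommMonoid M] (g : V → M) :
    ∑ v, ∑ u ∈ G.neighborFinset v, g u = ∑ u, G.degree u • g u := by
  rw [Finset.sum_comm' (s' := fun u => G.neighborFinset u) (t' := univ) (by simp [adj_comm])]
  simp only [sum_const, card_neighborFinset_eq_degree]

end SimpleGraph

open SimpleGraph

section RainbowDomination

variable {V : Type*} {G : SimpleGraph V} {k : ℕ} {f : V → Finset (Fin k)}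

theorem IsKRDF.le_sum_card_neighborFinset [Fintype V] [DecidableRel G.Adj]
    (hf : IsKRDF G k f) {v : V} (hv : f v = ∅) :
    k ≤ ∑ u ∈ G.neighborFinset v, #(f u) := by
  have hcover : (univ : Finset (Fin k)) ⊆ (G.neighborFinset v).biUnion f := fun i _ => by
    obtain ⟨u, hvu, hi⟩ := hf v hv i
    exact mem_biUnion.2 ⟨u, (mem_neighborFinset G v u).2 hvu, hi⟩
  calc k = #(univ : Finset (Fin k)) := (card_fin k).symm
    _ ≤ #((G.neighborFinset v).biUnion f) := card_le_card hcover
    _ ≤ ∑ u ∈ G.neighborFinset v, #(f u) := card_biUnion_le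

theorem IsKRDF.card_mul_le [Fintype V] [DecidableRel G.Adj] (hf : IsKRDF G k f) :
    Fintype.card V * k ≤ (G.maxDegree + k) * ∑ v, #(f v) := by
  set S := univ.filter fun v => f v = ∅
  set w := ∑ v, #(f v)
  have empty_part : #S * k ≤ G.maxDegree * w :=
    calc #S * k = ∑ _v ∈ S, k := by rw [sum_const, smul_eq_mul]
      _ ≤ ∑ v ∈ S, ∑ u ∈ G.neighborFinset v, #(f u) :=
          sum_le_sum fun v hv => hf.le_sum_card_neighborFinset (mem_filter.1 hv).2
      _ ≤ ∑ v, ∑ u ∈ G.neighborFinset v, #(f u) := sum_le_sum_of_subset (subset_univ S)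
      _ = ∑ u, G.degree u * #(f u) := G.sum_sum_neighborFinset _
      _ ≤ ∑ u, G.maxDegree * #(f u) :=
          sum_le_sum fun u _ => Nat.mul_le_mul_right _ (G.degree_le_maxDegree u)
      _ = G.maxDegree * w := (mul_sum _ _ _).symm
  have labelled_part : #(univ.filter fun v => f v ≠ ∅) ≤ w :=
    calc #(univ.filter fun v => f v ≠ ∅) = ∑ _v ∈ univ.filter fun v => f v ≠ ∅, 1 :=
          card_eq_sum_ones _
      _ ≤ ∑ v ∈ univ.filter fun v => f v ≠ ∅, #(f v) :=
          sum_le_sum fun v hv => card_pos.2 (nonempty_iff_ne_empty.2 (mem_filter.1 hv).2)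
      _ ≤ w := sum_le_sum_of_subset (subset_univ _)
  have hsplit := card_filter_add_card_filter_not (s := (univ : Finset V)) (fun v => f v = ∅)
  rw [card_univ] at hsplit
  rw [← hsplit, add_mul, add_mul]
  exact add_le_add empty_part (by rw [mul_comm]; exact Nat.mul_le_mul_left k labelled_part)

theorem isKRDF_const_univ (G : SimpleGraph V) (k : ℕ) : IsKRDF G k fun _ => univ :=
  fun _ hv i => absurd (hv ▸ mem_univ i) (notMem_empty i)

theorem rdnum_le_of_isKRDF [Fintype V] (hf : IsKRDF G k f) : rdnum G k ≤ ∑ v, #(f v) :=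
  Nat.sInf_le ⟨f, hf, rfl⟩

theorem card_mul_le_rdnum [Fintype V] [DecidableRel G.Adj] :
    Fintype.card V * k ≤ (G.maxDegree + k) * rdnum G k := by
  obtain ⟨f, hf, hw⟩ : rdnum G k ∈ {n | ∃ f : V → Finset (Fin k), IsKRDF G k f ∧ ∑ v, #(f v) = n} :=
    Nat.sInf_mem ⟨_, _, isKRDF_const_univ G k, rfl⟩
  exact hw ▸ hf.card_mul_le

end RainbowDomination

/-- The labelled vertices are the class `i + j` even of the bipartite torus, coloured so that each
vertex of the other class sees four distinct colours on its four neighbours. -/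
def rdfC4C4 : Fin 4 × Fin 4 → Finset (Fin 4)
  | (0, 0) => {0} | (0, 2) => {1} | (1, 1) => {2} | (1, 3) => {3}
  | (2, 0) => {1} | (2, 2) => {0} | (3, 1) => {3} | (3, 3) => {2}
  | _ => ∅

theorem isKRDF_rdfC4C4 : IsKRDF ((cycleGraph 4).boxProd (cycleGraph 4)) 4 rdfC4C4 := by
  unfold IsKRDF; decide

theorem maxDegree_C4_boxProd_C4_le : ((cycleGraph 4).boxProd (cycleGraph 4)).maxDegree ≤ 4 :=
  maxDegree_le_of_forall_degree_le _ _ fun v => by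
    rw [degree_boxProd, cycleGraph_degree_three_le, cycleGraph_degree_three_le]

theorem rdnum_C4_boxProd_C4 :
    rdnum ((cycleGraph 4).boxProd (cycleGraph 4)) 4 = 8 := by
  have upper := rdnum_le_of_isKRDF isKRDF_rdfC4C4
  have lower := card_mul_le_rdnum (G := (cycleGraph 4).boxProd (cycleGraph 4)) (k := 4)
  have hΔ := maxDegree_C4_boxProd_C4_le
  have hsum : ∑ v, #(rdfC4C4 v) = 8 := by decide
  simp only [Fintype.card_prod, Fintype.card_fin] at lower
  nlinarith
end
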